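/- arXiv:1404.4378 — 5 statements merged into one kernel-verified Lean document; each statement's English description precedes it below -/
import Mathlib

section
/- Let 0 < d < 2r, and let x, y ∈ ℝ² with dist(x,y) = d. Let D₁ and D₂ be the two closed disks of radius r whose boundary circles each pass through both x and y, and let I = interior(D₁ ∩ D₂) be the open lens region. Then the diameter of the closure of I is strictly less than 2r. -/
/-!
The intersection of the two closed disks is compact, so its diameter is attained by some pair
`p, q`. Both disks have radius `r`, so `dist p q ≤ 2r`, and if equality held, strict convexity of
the Euclidean norm would force each centre to be the midpoint of `p` and `q`, i.e. `c₁ = c₂`.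
-/

open Set Metric

noncomputable section

abbrev Plane := EuclideanSpace ℝ (Fin 2)

theorem IsCompact.exists_dist_eq_diam {α : Type*} [PseudoMetricSpace α] {s : Set α}
    (hs : IsCompact s) (hne : s.Nonempty) : ∃ p ∈ s, ∃ q ∈ s, dist p q = diam s := by
  obtain ⟨⟨p, q⟩, ⟨hp, hq⟩, hmax⟩ :=
    (hs.prod hs).exists_isMaxOn (hne.prod hne) continuous_dist.continuousOn
  refine ⟨p, hp, q, hq, le_antisymm (dist_le_diam_of_mem hs.isBounded hp hq) ?_⟩
  exact diam_le_of_forall_dist_le dist_nonneg fun a ha b hb => hmax (mk_mem_prod ha hb)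

section StrictConvex

variable {E : Type*} [NormedAddCommGroup E] [NormedSpace ℝ E] [StrictConvexSpace ℝ E]

theorem eq_midpoint_of_mem_closedBall_of_dist_eq_two_mul {c p q : E} {r : ℝ}
    (hp : p ∈ closedBall c r) (hq : q ∈ closedBall c r) (hpq : dist p q = 2 * r) :
    c = midpoint ℝ p q := by
  rw [mem_closedBall] at hp
  rw [mem_closedBall'] at hq
  have hpc : dist p c = r := by linarith [dist_triangle p c q]
  have hcq : dist c q = r := by linarith [dist_triangle p c q]
  exact eq_midpoint_of_dist_eq_half (by rw [hpc, hpq]; ring) (by rw [hcq, hpq]; ring)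

theorem dist_lt_two_mul_of_mem_closedBall_inter_closedBall {c₁ c₂ p q : E} {r : ℝ}
    (hc : c₁ ≠ c₂) (hp : p ∈ closedBall c₁ r ∩ closedBall c₂ r)
    (hq : q ∈ closedBall c₁ r ∩ closedBall c₂ r) : dist p q < 2 * r := by
  have hle : dist p q ≤ 2 * r := by
    linarith [mem_closedBall.1 hp.1, mem_closedBall.1 hq.1, dist_triangle_right p q c₁]
  refine hle.lt_of_ne fun hpq => hc ?_
  have h₁ : c₁ = midpoint ℝ p q := eq_midpoint_of_mem_closedBall_of_dist_eq_two_mul hp.1 hq.1 hpq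
  have h₂ : c₂ = midpoint ℝ p q := eq_midpoint_of_mem_closedBall_of_dist_eq_two_mul hp.2 hq.2 hpq
  exact h₁.trans h₂.symm

theorem diam_closedBall_inter_closedBall_lt [ProperSpace E] {c₁ c₂ : E} {r : ℝ} (hr : 0 < r)
    (hc : c₁ ≠ c₂) : diam (closedBall c₁ r ∩ closedBall c₂ r) < 2 * r := by
  rcases (closedBall c₁ r ∩ closedBall c₂ r).eq_empty_or_nonempty with hempty | hne
  · rw [hempty, diam_empty]
    positivity
  obtain ⟨p, hp, q, hq, hpq⟩ :=
    ((isCompact_closedBall c₁ r).inter_right isClosed_closedBall).exists_dist_eq_diam hne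
  exact hpq ▸ dist_lt_two_mul_of_mem_closedBall_inter_closedBall hc hp hq

end StrictConvex

theorem lens_diameter_lt_general (r : ℝ) (hr : 0 < r) (c₁ c₂ : Plane) (hcc : c₁ ≠ c₂) :
    Metric.diam (closure (interior (closedBall c₁ r ∩ closedBall c₂ r))) < 2 * r := by
  have hclosed : IsClosed (closedBall c₁ r ∩ closedBall c₂ r) :=
    isClosed_closedBall.inter isClosed_closedBall
  calc diam (closure (interior (closedBall c₁ r ∩ closedBall c₂ r)))
      ≤ diam (closedBall c₁ r ∩ closedBall c₂ r) :=
        diam_mono hclosed.closure_interior_subset (isBounded_closedBall.subset inter_subset_left)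
    _ < 2 * r := diam_closedBall_inter_closedBall_lt hr hcc

/-- For 0 < d < 2r and x, y at distance d, if D₁, D₂ are the two closed radius-r
disks whose boundary circles pass through x and y, then the closure of the open
lens I = int(D₁ ∩ D₂) has diameter strictly less than 2r. -/
theorem lens_diameter_lt (r d : ℝ) (hr : 0 < r) (hd : 0 < d) (hd2 : d < 2 * r)
    (x y c₁ c₂ : Plane) (hxy : dist x y = d)
    (hc₁x : dist c₁ x = r) (hc₁y : dist c₁ y = r)
    (hc₂x : dist c₂ x = r) (hc₂y : dist c₂ y = r)
    (hcc : c₁ ≠ c₂) :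
    Metric.diam (closure (interior (closedBall c₁ r ∩ closedBall c₂ r))) < 2 * r :=
  lens_diameter_lt_general r hr c₁ c₂ hcc
end
end

section
/- Let σ : [0,s] → ℝ² be a 1-constrained curve (unit speed, C¹, piecewise C², ‖σ''‖ ≤ 1) whose image lies in a closed unit disk D. Then either the image of σ is entirely contained in the boundary circle ∂D, or σ(t) lies in the interior of D for all t ∈ (0,s). -/
/-! Put `f t = dist (σ t) c ^ 2`. Off the finitely many corners,
`f'' = 2 (‖σ'‖² + ⟪σ - c, σ''⟫) ≥ 2 (1 - ‖σ - c‖ ‖σ''‖) ≥ 0`, and `f' = 2 ⟪σ - c, σ'⟫` is continuous,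
so `f'` is monotone and `f` is convex. A convex function bounded by `1` on an interval that
attains `1` at an interior point is constant. -/

open Set Metric

noncomputable section

def IsKConstrained (κ s : ℝ) (σ σ' σ'' : ℝ → Plane) : Prop :=
  0 ≤ s ∧
  (∀ t ∈ Icc (0:ℝ) s, HasDerivAt σ (σ' t) t) ∧
  ContinuousOn σ' (Icc 0 s) ∧
  (∀ t ∈ Icc (0:ℝ) s, ‖σ' t‖ = 1) ∧
  ∃ F : Finset ℝ, ∀ t ∈ Icc (0:ℝ) s, t ∉ F →
    HasDerivAt σ' (σ'' t) t ∧ ‖σ'' t‖ ≤ κ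

open scoped RealInnerProductSpace

theorem monotoneOn_Icc_of_hasDerivAt_nonneg_off_finset {f f' : ℝ → ℝ} (F : Finset ℝ) {a b : ℝ}
    (hf : ContinuousOn f (Icc a b)) (hderiv : ∀ t ∈ Ioo a b, t ∉ F → HasDerivAt f (f' t) t)
    (hnonneg : ∀ t ∈ Ioo a b, t ∉ F → 0 ≤ f' t) : MonotoneOn f (Icc a b) := by
  induction F using Finset.induction_on generalizing a b with
  | empty =>
    refine monotoneOn_of_hasDerivWithinAt_nonneg (convex_Icc a b) hf
      (fun t ht ↦ (hderiv t ?_ (Finset.notMem_empty t)).hasDerivWithinAt)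
      (fun t ht ↦ hnonneg t ?_ (Finset.notMem_empty t)) <;> rwa [interior_Icc] at ht
  | insert p F _ ih =>
    have off_insert : ∀ t, t ≠ p → t ∉ F → t ∉ insert p F := by simp_all
    by_cases hp : p ∈ Ioo a b
    · have left : MonotoneOn f (Icc a p) :=
        ih (hf.mono (Icc_subset_Icc_right hp.2.le))
          (fun t ht htF ↦ hderiv t ⟨ht.1, ht.2.trans hp.2⟩ (off_insert t ht.2.ne htF))
          (fun t ht htF ↦ hnonneg t ⟨ht.1, ht.2.trans hp.2⟩ (off_insert t ht.2.ne htF))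
      have right : MonotoneOn f (Icc p b) :=
        ih (hf.mono (Icc_subset_Icc_left hp.1.le))
          (fun t ht htF ↦ hderiv t ⟨hp.1.trans ht.1, ht.2⟩ (off_insert t ht.1.ne' htF))
          (fun t ht htF ↦ hnonneg t ⟨hp.1.trans ht.1, ht.2⟩ (off_insert t ht.1.ne' htF))
      rw [← Icc_union_Icc_eq_Icc hp.1.le hp.2.le]
      exact left.union_right right (isGreatest_Icc hp.1.le) (isLeast_Icc hp.2.le)
    · have hne : ∀ t ∈ Ioo a b, t ≠ p := fun t ht htp ↦ hp (htp ▸ ht)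
      exact ih hf (fun t ht htF ↦ hderiv t ht (off_insert t (hne t ht) htF))
        (fun t ht htF ↦ hnonneg t ht (off_insert t (hne t ht) htF))

theorem ConvexOn.eq_of_isMaxOn_of_mem_Ioo {f : ℝ → ℝ} {a b t₀ : ℝ} (hf : ConvexOn ℝ (Icc a b) f)
    (hmax : IsMaxOn f (Icc a b) t₀) (ht₀ : t₀ ∈ Ioo a b) {t : ℝ} (ht : t ∈ Icc a b) :
    f t = f t₀ := by
  refine le_antisymm (hmax ht) ?_
  rcases lt_or_ge t t₀ with htt₀ | ht₀t
  · exact hf.le_left_of_right_le'' ht (right_mem_Icc.2 (ht.1.trans ht.2)) htt₀.le ht₀.2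
      (hmax (right_mem_Icc.2 (ht.1.trans ht.2)))
  · exact hf.le_right_of_left_le'' (left_mem_Icc.2 (ht.1.trans ht.2)) ht ht₀.1 ht₀t
      (hmax (left_mem_Icc.2 (ht.1.trans ht.2)))

namespace IsKConstrained

variable {κ r s : ℝ} {σ σ' σ'' : ℝ → Plane} {c : Plane}

variable (c) in
theorem hasDerivAt_dist_sq (hσ : IsKConstrained κ s σ σ' σ'') {t : ℝ}
    (ht : t ∈ Icc 0 s) : HasDerivAt (fun u ↦ dist (σ u) c ^ 2) (2 * ⟪σ t - c, σ' t⟫) t := by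
  simpa only [dist_eq_norm] using ((hσ.2.1 t ht).sub_const c).norm_sq

theorem monotoneOn_deriv_dist_sq (hσ : IsKConstrained κ s σ σ' σ'') (hκr : κ * r ≤ 1)
    (hD : ∀ t ∈ Icc 0 s, σ t ∈ closedBall c r) :
    MonotoneOn (fun t ↦ 2 * ⟪σ t - c, σ' t⟫) (Icc 0 s) := by
  obtain ⟨-, hσ', hσ'_cont, hunit, F, hσ''⟩ := hσ
  have hσ_cont : ContinuousOn σ (Icc 0 s) := fun t ht ↦ (hσ' t ht).continuousAt.continuousWithinAt
  refine monotoneOn_Icc_of_hasDerivAt_nonneg_off_finset F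
    (f' := fun t ↦ 2 * (⟪σ t - c, σ'' t⟫ + ⟪σ' t, σ' t⟫))
    (continuousOn_const.mul ((hσ_cont.sub continuousOn_const).inner hσ'_cont))
    (fun t ht htF ↦ (((hσ' t (Ioo_subset_Icc_self ht)).sub_const c).inner ℝ
      (hσ'' t (Ioo_subset_Icc_self ht) htF).1).const_mul 2)
    (fun t ht htF ↦ ?_)
  replace ht := Ioo_subset_Icc_self ht
  have hdist : ‖σ t - c‖ ≤ r := by simpa [dist_eq_norm] using hD t ht
  have hcurv : ‖σ t - c‖ * ‖σ'' t‖ ≤ 1 := calc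
    ‖σ t - c‖ * ‖σ'' t‖ ≤ r * κ :=
      mul_le_mul hdist (hσ'' t ht htF).2 (norm_nonneg _) ((norm_nonneg _).trans hdist)
    _ ≤ 1 := by linarith
  have hspeed : ⟪σ' t, σ' t⟫ = 1 := by rw [real_inner_self_eq_norm_sq, hunit t ht, one_pow]
  have := neg_le_of_abs_le ((abs_real_inner_le_norm (σ t - c) (σ'' t)).trans hcurv)
  linarith

theorem convexOn_dist_sq (hσ : IsKConstrained κ s σ σ' σ'') (hκr : κ * r ≤ 1)
    (hD : ∀ t ∈ Icc 0 s, σ t ∈ closedBall c r) :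
    ConvexOn ℝ (Icc 0 s) (fun t ↦ dist (σ t) c ^ 2) := by
  have hderiv : ∀ t ∈ Ioo 0 s, HasDerivAt (fun u ↦ dist (σ u) c ^ 2) (2 * ⟪σ t - c, σ' t⟫) t :=
    fun t ht ↦ hσ.hasDerivAt_dist_sq c (Ioo_subset_Icc_self ht)
  refine MonotoneOn.convexOn_of_deriv (convex_Icc 0 s)
    (fun t ht ↦ (hσ.hasDerivAt_dist_sq c ht).continuousAt.continuousWithinAt)
    (fun t ht ↦ (hderiv t (by rwa [interior_Icc] at ht)).differentiableAt.differentiableWithinAt) ?_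
  rw [interior_Icc]
  exact ((hσ.monotoneOn_deriv_dist_sq hκr hD).mono Ioo_subset_Icc_self).congr
    fun t ht ↦ (hderiv t ht).deriv.symm

theorem dist_eq_of_dist_eq_of_mem_Ioo (hσ : IsKConstrained κ s σ σ' σ'') (hκr : κ * r ≤ 1)
    (hD : ∀ t ∈ Icc 0 s, σ t ∈ closedBall c r) {t₀ : ℝ} (ht₀ : t₀ ∈ Ioo 0 s)
    (hσt₀ : dist (σ t₀) c = r) {t : ℝ} (ht : t ∈ Icc 0 s) : dist (σ t) c = r := by
  have hmax : IsMaxOn (fun t ↦ dist (σ t) c ^ 2) (Icc 0 s) t₀ := isMaxOn_iff.2 fun u hu ↦ by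
    simpa only [hσt₀] using pow_le_pow_left₀ dist_nonneg (hD u hu) 2
  have := (hσ.convexOn_dist_sq hκr hD).eq_of_isMaxOn_of_mem_Ioo hmax ht₀ ht
  rwa [hσt₀, pow_left_inj₀ dist_nonneg (hσt₀ ▸ dist_nonneg) two_ne_zero] at this

end IsKConstrained

/-- A 1-constrained curve lying in a closed unit disk D either lies entirely in
the boundary circle ∂D, or lies in the interior of D at all interior times. -/
theorem curve_in_unit_disk (s : ℝ) (σ σ' σ'' : ℝ → Plane) (c : Plane)
    (hσ : IsKConstrained 1 s σ σ' σ'')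
    (hD : ∀ t ∈ Icc (0:ℝ) s, σ t ∈ closedBall c 1) :
    (∀ t ∈ Icc (0:ℝ) s, dist (σ t) c = 1) ∨
    (∀ t ∈ Ioo (0:ℝ) s, dist (σ t) c < 1) := by
  by_cases htouch : ∃ t₀ ∈ Ioo 0 s, dist (σ t₀) c = 1
  · obtain ⟨t₀, ht₀, hσt₀⟩ := htouch
    exact .inl fun t ht ↦ hσ.dist_eq_of_dist_eq_of_mem_Ioo (mul_one 1).le hD ht₀ hσt₀ ht
  · push Not at htouch
    exact .inr fun t ht ↦ (hD t (Ioo_subset_Icc_self ht)).lt_of_ne (htouch t ht)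
end
end

section
/- Let r > 0 and let B = {(x,y) ∈ ℝ² : -r < x < r, y ≥ 0}. Let C be a circle of radius r centered on the negative y-axis. There is no κ-constrained plane curve σ : [0,s] → B with κ = 1/r such that σ(0) and σ(s) lie on the x-axis and on C, and some point of the image of σ lies strictly above C (i.e., outside the disk bounded by C). -/
/-!
Along `σ`, `archHeight r` equals the centre height of `C` at both endpoints and exceeds it at a
point above `C`, so its maximum is attained at an interior time `t₀`. The corresponding circle `Q`,
with centre `q`, touches `σ` at `t₀`, and every point of `σ` not below `q` lies in the disk bounded
by `Q`. On a stretch of this kind ending at `t₀`, `⟪σ - q, σ'⟫` is nondecreasing because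
`‖σ''‖ ≤ 1 / r` and vanishes at `t₀`, so `‖σ - q‖` is nonincreasing and `σ` stays on `Q`.
Going backwards from `t₀`, `σ` either reaches the horizontal diameter of `Q`, a point with
`|x| = r` outside the band, or stays above it up to `σ 0`, which then lies on both `Q` and `C`,
forcing `Q = C`.
-/

open Set Metric

noncomputable section

open scoped InnerProductSpace Topology

theorem le_of_hasDerivAt_nonneg_off_finset {f f' : ℝ → ℝ} (F : Finset ℝ) :
    ∀ {a b : ℝ}, a ≤ b → ContinuousOn f (Icc a b) →
      (∀ x ∈ Ioo a b, x ∉ F → HasDerivAt f (f' x) x ∧ 0 ≤ f' x) → f a ≤ f b := by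
  induction F using Finset.induction_on with
  | empty =>
    intro a b hab hf hf'
    have hmono : MonotoneOn f (Icc a b) := by
      refine monotoneOn_of_deriv_nonneg (convex_Icc a b) hf ?_ ?_ <;>
        intro x hx <;> rw [interior_Icc] at hx
      · exact (hf' x hx (Finset.notMem_empty x)).1.differentiableAt.differentiableWithinAt
      · rw [(hf' x hx (Finset.notMem_empty x)).1.deriv]
        exact (hf' x hx (Finset.notMem_empty x)).2
    exact hmono (left_mem_Icc.2 hab) (right_mem_Icc.2 hab) hab
  | @insert c F hcF ih =>
    intro a b hab hf hf'
    by_cases hc : c ∈ Ioo a b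
    · calc f a ≤ f c := ih hc.1.le (hf.mono (Icc_subset_Icc_right hc.2.le)) fun x hx hxF =>
            hf' x ⟨hx.1, hx.2.trans hc.2⟩ (by simp [hxF, hx.2.ne])
        _ ≤ f b := ih hc.2.le (hf.mono (Icc_subset_Icc_left hc.1.le)) fun x hx hxF =>
            hf' x ⟨hc.1.trans hx.1, hx.2⟩ (by simp [hxF, hx.1.ne'])
    · exact ih hab hf fun x hx hxF =>
        hf' x hx fun h => (Finset.mem_insert.1 h).elim (fun e => hc (e ▸ hx)) hxF

theorem inner_sub_eq_zero_of_isLocalMax_dist {E : Type*} [NormedAddCommGroup E]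
    [InnerProductSpace ℝ E] {γ : ℝ → E} {v q : E} {t : ℝ} (hγ : HasDerivAt γ v t)
    (hmax : IsLocalMax (fun u => dist (γ u) q) t) : ⟪γ t - q, v⟫_ℝ = 0 := by
  have hmax_sq : IsLocalMax (fun u => ‖γ u - q‖ ^ 2) t := by
    filter_upwards [hmax] with u hu
    simp only [← dist_eq_norm]
    exact pow_le_pow_left₀ dist_nonneg hu 2
  have := hmax_sq.hasDerivAt_eq_zero (hγ.sub_const q).norm_sq
  linarith

theorem ContinuousOn.exists_eq_forall_Icc_le {f : ℝ → ℝ} {a b m : ℝ} (hab : a ≤ b)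
    (hf : ContinuousOn f (Icc a b)) (ha : f a ≤ m) (hb : m ≤ f b) :
    ∃ c ∈ Icc a b, f c = m ∧ ∀ t ∈ Icc c b, m ≤ f t := by
  set S := Icc a b ∩ f ⁻¹' Iic m
  have hS : IsClosed S := hf.preimage_isClosed_of_isClosed isClosed_Icc isClosed_Iic
  have hbdd : BddAbove S := bddAbove_Icc.mono inter_subset_left
  obtain ⟨⟨hca, hcb⟩, hfc⟩ : sSup S ∈ S := hS.csSup_mem ⟨a, left_mem_Icc.2 hab, ha⟩ hbdd
  have hlast : ∀ t ∈ Icc (sSup S) b, f t ≤ m → t ≤ sSup S := fun t ht hft =>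
    le_csSup hbdd ⟨⟨hca.trans ht.1, ht.2⟩, hft⟩
  obtain ⟨u, hu, hfu⟩ := intermediate_value_Icc hcb (hf.mono (Icc_subset_Icc_left hca)) ⟨hfc, hb⟩
  have hcu : u = sSup S := le_antisymm (hlast u hu hfu.le) hu.1
  refine ⟨sSup S, ⟨hca, hcb⟩, hcu ▸ hfu, fun t ht => ?_⟩
  by_contra! hft
  have htu : t = u := hcu ▸ le_antisymm (hlast t ht hft.le) ht.1
  exact (hfu ▸ htu ▸ hft).false

theorem mapsTo_sphere_of_curvature_le {E : Type*} [NormedAddCommGroup E]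
    [InnerProductSpace ℝ E] {γ γ' γ'' : ℝ → E} {F : Finset ℝ} {a b κ r : ℝ} {q : E}
    (hγ : ∀ t ∈ Icc a b, HasDerivAt γ (γ' t) t) (hγ'c : ContinuousOn γ' (Icc a b))
    (hunit : ∀ t ∈ Icc a b, ‖γ' t‖ = 1)
    (hγ'' : ∀ t ∈ Ioo a b, t ∉ F → HasDerivAt γ' (γ'' t) t ∧ ‖γ'' t‖ ≤ κ) (hκr : κ * r ≤ 1)
    (hball : MapsTo γ (Icc a b) (closedBall q r)) (hnear : ∀ᶠ t in 𝓝 b, γ t ∈ closedBall q r)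
    (hb : γ b ∈ sphere q r) :
    MapsTo γ (Icc a b) (sphere q r) := by
  intro t ht
  have hr : 0 ≤ r := (mem_sphere_iff_norm.1 hb) ▸ norm_nonneg _
  have htangent : ⟪γ b - q, γ' b⟫_ℝ = 0 :=
    inner_sub_eq_zero_of_isLocalMax_dist (hγ b ⟨ht.1.trans ht.2, le_rfl⟩) <| by
      filter_upwards [hnear] with u hu using hb ▸ hu
  have hsub : Icc t b ⊆ Icc a b := Icc_subset_Icc_left ht.1
  have hγc : ContinuousOn γ (Icc t b) := fun u hu =>
    (hγ u (hsub hu)).continuousAt.continuousWithinAt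
  -- `G` is half the derivative of `‖γ - q‖²`.
  set G : ℝ → ℝ := fun u => ⟪γ u - q, γ' u⟫_ℝ
  have hG : ∀ u ∈ Icc t b, G u ≤ 0 := by
    intro u hu
    rw [← htangent]
    refine le_of_hasDerivAt_nonneg_off_finset (f := G)
      (f' := fun x => ⟪γ x - q, γ'' x⟫_ℝ + ⟪γ' x, γ' x⟫_ℝ) F hu.2
      ((hγc.mono (Icc_subset_Icc_left hu.1)).sub continuousOn_const |>.inner
        (hγ'c.mono (hsub.trans' (Icc_subset_Icc_left hu.1)))) fun x hx hxF => ?_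
    have hx' : x ∈ Icc a b := hsub ⟨hu.1.trans hx.1.le, hx.2.le⟩
    obtain ⟨hγ''x, hκx⟩ := hγ'' x ⟨ht.1.trans_lt (hu.1.trans_lt hx.1), hx.2⟩ hxF
    refine ⟨((hγ x hx').sub_const q).inner ℝ hγ''x, ?_⟩
    have hnorm : ‖γ x - q‖ * ‖γ'' x‖ ≤ 1 :=
      (mul_le_mul (mem_closedBall_iff_norm.1 (hball hx')) hκx (norm_nonneg _) hr).trans
        (by linarith)
    rw [real_inner_self_eq_norm_sq, hunit x hx']
    linarith [neg_le_of_abs_le (abs_real_inner_le_norm (γ x - q) (γ'' x))]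
  have hnorm_sq : ‖γ b - q‖ ^ 2 ≤ ‖γ t - q‖ ^ 2 := by
    have := le_of_hasDerivAt_nonneg_off_finset (f := fun u => -‖γ u - q‖ ^ 2)
      (f' := fun u => -(2 * G u)) ∅ ht.2 ((hγc.sub continuousOn_const).norm.pow 2).neg
      fun x hx _ => ⟨((hγ x (hsub (Ioo_subset_Icc_self hx))).sub_const q).norm_sq.neg,
        by linarith [hG x (Ioo_subset_Icc_self hx)]⟩
    linarith
  rw [mem_sphere_iff_norm] at hb ⊢
  refine le_antisymm (mem_closedBall_iff_norm.1 (hball ht)) ?_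
  exact hb ▸ (pow_le_pow_iff_left₀ (norm_nonneg _) (norm_nonneg _) two_ne_zero).1 hnorm_sq

theorem IsKConstrained.mem_sphere_of_touch {κ s r a b : ℝ} {σ σ' σ'' : ℝ → Plane} {q : Plane}
    (hσ : IsKConstrained κ s σ σ' σ'') (hκr : κ * r ≤ 1) (ha : 0 ≤ a) (hab : a ≤ b) (hb : b ≤ s)
    (hball : MapsTo σ (Icc a b) (closedBall q r)) (hnear : ∀ᶠ t in 𝓝 b, σ t ∈ closedBall q r)
    (hσb : σ b ∈ sphere q r) : σ a ∈ sphere q r := by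
  obtain ⟨-, hσ', hσ'c, hunit, F, hσ''⟩ := hσ
  have hsub : Icc a b ⊆ Icc 0 s := Icc_subset_Icc ha hb
  exact mapsTo_sphere_of_curvature_le (fun t ht => hσ' t (hsub ht)) (hσ'c.mono hsub)
    (fun t ht => hunit t (hsub ht)) (fun t ht => hσ'' t (hsub (Ioo_subset_Icc_self ht))) hκr
    hball hnear hσb (left_mem_Icc.2 hab)

namespace Plane

theorem dist_sq_of_apply_zero_eq_zero {p q : Plane} (hq : q 0 = 0) :
    dist p q ^ 2 = p 0 ^ 2 + (p 1 - q 1) ^ 2 := by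
  rw [EuclideanSpace.dist_eq, Real.sq_sqrt (by positivity), Fin.sum_univ_two, hq]
  simp [Real.dist_eq, sq_abs]

/-- The height `k` of the circle of radius `r` centred at `(0, k)` whose upper half passes
through `p`. -/
def archHeight (r : ℝ) (p : Plane) : ℝ := p 1 - √(r ^ 2 - p 0 ^ 2)

theorem continuous_archHeight (r : ℝ) : Continuous (archHeight r) := by
  unfold archHeight; fun_prop

variable {r : ℝ} {p q : Plane}

theorem archHeight_lt (hp : p 0 ^ 2 < r ^ 2) : archHeight r p < p 1 := by
  unfold archHeight
  linarith [Real.sqrt_pos.2 (sub_pos.2 hp)]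

theorem archHeight_eq_of_dist_eq (hq : q 0 = 0) (hle : q 1 ≤ p 1) (h : dist p q = r) :
    archHeight r p = q 1 := by
  have hsq := dist_sq_of_apply_zero_eq_zero (p := p) hq
  rw [h] at hsq
  rw [archHeight, show r ^ 2 - p 0 ^ 2 = (p 1 - q 1) ^ 2 by linarith,
    Real.sqrt_sq (sub_nonneg.2 hle)]
  ring

theorem dist_le_of_archHeight_le (hq : q 0 = 0) (hr : 0 ≤ r) (hp : p 0 ^ 2 ≤ r ^ 2)
    (hle : q 1 ≤ p 1) (h : archHeight r p ≤ q 1) : dist p q ≤ r := by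
  have hsq : (p 1 - q 1) ^ 2 ≤ r ^ 2 - p 0 ^ 2 := by
    calc (p 1 - q 1) ^ 2 ≤ √(r ^ 2 - p 0 ^ 2) ^ 2 := by
          unfold archHeight at h
          gcongr
          linarith
      _ = r ^ 2 - p 0 ^ 2 := Real.sq_sqrt (sub_nonneg.2 hp)
  rw [← pow_le_pow_iff_left₀ dist_nonneg hr two_ne_zero, dist_sq_of_apply_zero_eq_zero hq]
  linarith

theorem dist_eq_of_archHeight_eq (hq : q 0 = 0) (hr : 0 ≤ r) (hp : p 0 ^ 2 ≤ r ^ 2)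
    (h : archHeight r p = q 1) : dist p q = r := by
  rw [← sq_eq_sq₀ dist_nonneg hr, dist_sq_of_apply_zero_eq_zero hq, ← h, archHeight,
    sub_sub_cancel, Real.sq_sqrt (sub_nonneg.2 hp)]
  ring

theorem lt_archHeight_of_lt_dist (hq : q 0 = 0) (hr : 0 ≤ r) (hlt : q 1 < p 1)
    (h : r < dist p q) : q 1 < archHeight r p := by
  have hsq : r ^ 2 < dist p q ^ 2 := by gcongr
  rw [dist_sq_of_apply_zero_eq_zero hq] at hsq
  have : √(r ^ 2 - p 0 ^ 2) < p 1 - q 1 := (Real.sqrt_lt' (sub_pos.2 hlt)).2 (by linarith)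
  unfold archHeight
  linarith

theorem exists_touching_circle {r s k : ℝ} {σ : ℝ → Plane} (hr : 0 ≤ r) (hs : 0 ≤ s)
    (hσ : ContinuousOn σ (Icc 0 s)) (hx : ∀ t ∈ Icc 0 s, σ t 0 ^ 2 < r ^ 2)
    (hk₀ : archHeight r (σ 0) = k) (hks : archHeight r (σ s) = k)
    (habove : ∃ t ∈ Icc 0 s, k < archHeight r (σ t)) :
    ∃ t₀ ∈ Ioo 0 s, ∃ q : Plane, q 0 = 0 ∧ k < q 1 ∧ q 1 < σ t₀ 1 ∧ dist (σ t₀) q = r ∧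
      ∀ t ∈ Icc 0 s, q 1 ≤ σ t 1 → dist (σ t) q ≤ r := by
  obtain ⟨t₀, ht₀, hmax⟩ := isCompact_Icc.exists_isMaxOn (nonempty_Icc.2 hs)
    ((continuous_archHeight r).comp_continuousOn hσ)
  set q : Plane := !₂[0, archHeight r (σ t₀)]
  have hq₀ : q 0 = 0 := by simp [q]
  have hq₁ : q 1 = archHeight r (σ t₀) := by simp [q]
  obtain ⟨t₁, ht₁, hkt₁⟩ := habove
  have hkq : k < q 1 := hq₁ ▸ hkt₁.trans_le (hmax ht₁)
  refine ⟨t₀, ⟨ht₀.1.lt_of_ne ?_, ht₀.2.lt_of_ne ?_⟩, q, hq₀, hkq,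
    hq₁ ▸ archHeight_lt (hx t₀ ht₀), dist_eq_of_archHeight_eq hq₀ hr (hx t₀ ht₀).le hq₁.symm,
    fun t ht hqt => dist_le_of_archHeight_le hq₀ hr (hx t ht).le hqt (hq₁ ▸ hmax ht)⟩
  all_goals rintro rfl; linarith

end Plane

open Plane

/-- Fundamental Lemma: no (1/r)-constrained curve contained in the band
B = {(x,y) : -r < x < r, y ≥ 0}, with endpoints on the x-axis and on a radius-r
circle C centered on the negative y-axis, can have a point strictly above C. -/
theorem no_curve_escapes_band (r s : ℝ) (hr : 0 < r)
    (σ σ' σ'' : ℝ → Plane) (c : Plane)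
    (hσ : IsKConstrained (1 / r) s σ σ' σ'')
    (hband : ∀ t ∈ Icc (0:ℝ) s, -r < (σ t) 0 ∧ (σ t) 0 < r ∧ 0 ≤ (σ t) 1)
    (hcenter₀ : c 0 = 0) (hcenter₁ : c 1 < 0)
    (hx0 : (σ 0) 1 = 0) (hxs : (σ s) 1 = 0)
    (hC0 : dist (σ 0) c = r) (hCs : dist (σ s) c = r)
    (habove : ∃ t ∈ Icc (0:ℝ) s, r < dist (σ t) c) :
    False := by
  have hσc : ContinuousOn σ (Icc 0 s) := fun t ht => (hσ.2.1 t ht).continuousAt.continuousWithinAt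
  have hy : Continuous fun p : Plane => p 1 := by fun_prop
  have hx : ∀ t ∈ Icc 0 s, σ t 0 ^ 2 < r ^ 2 := fun t ht =>
    sq_lt_sq' (hband t ht).1 (hband t ht).2.1
  have hk₀ := archHeight_eq_of_dist_eq hcenter₀ (by linarith) hC0
  obtain ⟨t₁, ht₁, ht₁c⟩ := habove
  obtain ⟨t₀, ht₀, q, hq₀, hcq, hqt₀, hon, hin⟩ := exists_touching_circle hr.le hσ.1 hσc hx hk₀
    (archHeight_eq_of_dist_eq hcenter₀ (by linarith) hCs)
    ⟨t₁, ht₁, lt_archHeight_of_lt_dist hcenter₀ hr.le (by linarith [(hband t₁ ht₁).2.2]) ht₁c⟩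
  have hnear : ∀ᶠ t in 𝓝 t₀, σ t ∈ closedBall q r := by
    filter_upwards [Icc_mem_nhds ht₀.1 ht₀.2,
      (hy.continuousAt.comp (hσ.2.1 t₀ (Ioo_subset_Icc_self ht₀)).continuousAt).eventually_const_lt
        hqt₀] with t ht hqt using hin t ht hqt.le
  have hsphere : ∀ a ∈ Icc 0 t₀, (∀ t ∈ Icc a t₀, q 1 ≤ σ t 1) → dist (σ a) q = r :=
    fun a ha hya => hσ.mem_sphere_of_touch (one_div_mul_cancel hr.ne').le ha.1 ha.2 ht₀.2.le
      (fun t ht => hin t ⟨ha.1.trans ht.1, ht.2.trans ht₀.2.le⟩ (hya t ht)) hnear hon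
  rcases le_or_gt 0 (q 1) with hq | hq
  · obtain ⟨a, ha, hya, hya'⟩ := ContinuousOn.exists_eq_forall_Icc_le (f := fun t => σ t 1)
      ht₀.1.le (hy.comp_continuousOn (hσc.mono (Icc_subset_Icc_right ht₀.2.le)))
      (hx0.trans_le hq) hqt₀.le
    have hd := dist_sq_of_apply_zero_eq_zero (p := σ a) hq₀
    rw [hsphere a ha hya', hya, sub_self] at hd
    linarith [hx a ⟨ha.1, ha.2.trans ht₀.2.le⟩]
  · have := archHeight_eq_of_dist_eq hq₀ (hq.le.trans_eq hx0.symm) (hsphere 0 ⟨le_rfl, ht₀.1.le⟩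
      fun t ht => hq.le.trans (hband t ⟨ht.1, ht.2.trans ht₀.2.le⟩).2.2)
    linarith
end
end

section
/- Let x, y ∈ ℝ² with 0 < dist(x,y) < 2r, and let I be the open lens given by the intersection of the interiors of the two radius-r disks D₁, D₂ whose boundaries pass through x and y. Then any κ-constrained curve (κ = 1/r) from x to y whose image lies in cl(I) is an embedded (injective on (0,s)) curve. -/
/-!
Along an arc of length `ℓ` the unit tangent of a curve with curvature at most `1 / r` turns by
an angle of at most `ℓ / r`. Projecting the arc onto the tangent at its midpoint then shows that
an arc of length `ℓ ≤ π r` has chord at least `2 r sin (ℓ / 2r)`, as for a circle of radius `r`.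
Such an arc cannot close up, and an arc of length `π r` would have chord `2 r`, which is more
than the diameter of the lens when the two centres differ. So the curve has length at most
`π r`, and is therefore embedded.
-/

open Set Metric

noncomputable section

open Real InnerProductGeometry Filter Topology
open scoped RealInnerProductSpace

theorem norm_sub_le_of_hasDerivAt_Ioo {E : Type*} [NormedAddCommGroup E] [NormedSpace ℝ E]
    {f f' : ℝ → E} {C a b : ℝ} (hab : a ≤ b) (hf : ContinuousOn f (Icc a b))
    (hf' : ∀ t ∈ Ioo a b, HasDerivAt f (f' t) t ∧ ‖f' t‖ ≤ C) :
    ‖f b - f a‖ ≤ C * (b - a) := by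
  rcases hab.eq_or_lt with rfl | hab
  · simp
  have hfa : Tendsto f (𝓝[>] a) (𝓝 (f a)) :=
    ((hf a (left_mem_Icc.2 hab.le)).mono_of_mem_nhdsWithin
      (Icc_mem_nhdsGT_of_mem ⟨le_rfl, hab⟩)).tendsto
  refine le_of_tendsto_of_tendsto ((tendsto_const_nhds.sub hfa).norm)
    (tendsto_const_nhds.mul (tendsto_const_nhds.sub nhdsWithin_le_nhds)) ?_
  filter_upwards [Ioo_mem_nhdsGT hab] with y hy
  exact norm_image_sub_le_of_norm_deriv_right_le_segment
    (hf.mono (Icc_subset_Icc hy.1.le le_rfl))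
    (fun t ht => (hf' t ⟨hy.1.trans_le ht.1, ht.2⟩).1.hasDerivWithinAt)
    (fun t ht => (hf' t ⟨hy.1.trans_le ht.1, ht.2⟩).2) b ⟨hy.2.le, le_rfl⟩

theorem norm_sub_le_of_hasDerivAt_off_finset {E : Type*} [NormedAddCommGroup E]
    [NormedSpace ℝ E] {f f' : ℝ → E} {C : ℝ} (F : Finset ℝ) {a b : ℝ} (hab : a ≤ b)
    (hf : ContinuousOn f (Icc a b))
    (hf' : ∀ t ∈ Ioo a b, t ∉ F → HasDerivAt f (f' t) t ∧ ‖f' t‖ ≤ C) :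
    ‖f b - f a‖ ≤ C * (b - a) := by
  induction F using Finset.induction_on generalizing a b with
  | empty => exact norm_sub_le_of_hasDerivAt_Ioo hab hf fun t ht => hf' t ht (by simp)
  | @insert w G hw ih =>
    by_cases hwab : w ∈ Ioo a b
    · have haw := ih hwab.1.le (hf.mono (Icc_subset_Icc le_rfl hwab.2.le)) fun t ht htG =>
        hf' t ⟨ht.1, ht.2.trans hwab.2⟩ (by simp [ht.2.ne, htG])
      have hwb := ih hwab.2.le (hf.mono (Icc_subset_Icc hwab.1.le le_rfl)) fun t ht htG =>
        hf' t ⟨hwab.1.trans ht.1, ht.2⟩ (by simp [ht.1.ne', htG])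
      calc ‖f b - f a‖ ≤ ‖f b - f w‖ + ‖f w - f a‖ := norm_sub_le_norm_sub_add_norm_sub _ _ _
        _ ≤ C * (b - w) + C * (w - a) := add_le_add hwb haw
        _ = C * (b - a) := by ring
    · refine ih hab hf fun t ht htG => hf' t ht ?_
      rw [Finset.mem_insert, not_or]
      exact ⟨fun htw => hwab (htw ▸ ht), htG⟩

theorem integral_cos_sub_midpoint_div {r : ℝ} (hr : r ≠ 0) (a b : ℝ) :
    ∫ t in a..b, cos ((t - (a + b) / 2) / r) = 2 * r * sin ((b - a) / (2 * r)) := by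
  have hderiv : ∀ t, HasDerivAt (fun t => r * sin ((t - (a + b) / 2) / r))
      (cos ((t - (a + b) / 2) / r)) t := fun t => by
    refine ((((hasDerivAt_id' t).sub_const ((a + b) / 2)).div_const r).sin.const_mul r
      ).congr_deriv ?_
    field_simp
  rw [intervalIntegral.integral_eq_sub_of_hasDerivAt (fun t _ => hderiv t)
    ((by fun_prop : Continuous _).intervalIntegrable a b)]
  have hb : (b - (a + b) / 2) / r = (b - a) / (2 * r) := by field_simp; ring
  have ha : (a - (a + b) / 2) / r = -((b - a) / (2 * r)) := by field_simp; ring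
  rw [ha, hb, sin_neg]
  ring

section

variable {V : Type*} [NormedAddCommGroup V] [InnerProductSpace ℝ V]

theorem angle_le_two_mul_arcsin {u v : V} (hu : ‖u‖ = 1) (hv : ‖v‖ = 1) {x : ℝ}
    (hx : ‖u - v‖ ≤ x) (hx2 : x ≤ 2) : angle u v ≤ 2 * arcsin (x / 2) := by
  have hx0 : 0 ≤ x := (norm_nonneg _).trans hx
  have hθ : 2 * arcsin (x / 2) ∈ Icc 0 π := by
    constructor
    · have := arcsin_nonneg.2 (by positivity : 0 ≤ x / 2); linarith
    · have := arcsin_le_pi_div_two (x / 2); linarith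
  have hcos : cos (2 * arcsin (x / 2)) = 1 - x ^ 2 / 2 := by
    rw [cos_two_mul, cos_sq', sin_arcsin (by linarith) (by linarith)]; ring
  have hinner : 1 - x ^ 2 / 2 ≤ ⟪u, v⟫ := by
    have h := norm_sub_sq_real u v
    rw [hu, hv] at h
    nlinarith [norm_nonneg (u - v)]
  rw [angle, hu, hv, mul_one, div_one, ← arccos_cos hθ.1 hθ.2, hcos]
  exact arccos_le_arccos hinner

theorem cos_le_inner_of_angle_le {u v : V} (hu : ‖u‖ = 1) (hv : ‖v‖ = 1) {θ : ℝ}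
    (hθ : angle u v ≤ θ) (hθπ : θ ≤ π) : cos θ ≤ ⟪u, v⟫ := by
  calc cos θ ≤ cos (angle u v) :=
        cos_le_cos_of_nonneg_of_le_pi (angle_nonneg u v) hθπ hθ
    _ = ⟪u, v⟫ := by rw [cos_angle, hu, hv, mul_one, div_one]

theorem tendsto_nat_mul_two_mul_arcsin (L : ℝ) :
    Tendsto (fun n : ℕ => (n : ℝ) * (2 * arcsin (L / n / 2))) atTop (𝓝 L) := by
  rcases eq_or_ne L 0 with rfl | hL
  · simp
  have hderiv : HasDerivAt (fun t => 2 * arcsin (t / 2)) 1 0 := by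
    have := ((hasDerivAt_arcsin (by norm_num) (by norm_num)).comp (0 : ℝ)
      ((hasDerivAt_id 0).div_const 2)).const_mul 2
    simpa using this
  have hslope := hderiv.tendsto_slope_zero
  have hLn : Tendsto (fun n : ℕ => L / n) atTop (𝓝[≠] 0) :=
    tendsto_nhdsWithin_iff.2 ⟨tendsto_const_div_atTop_nhds_zero_nat L,
      eventually_atTop.2 ⟨1, fun n hn => div_ne_zero hL (by positivity)⟩⟩
  have := (hslope.comp hLn).const_mul L
  simp only [mul_one] at this
  refine this.congr' (eventually_atTop.2 ⟨1, fun n hn => ?_⟩)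
  have hn' : (n : ℝ) ≠ 0 := by positivity
  simp only [Function.comp, zero_add, zero_div, arcsin_zero, mul_zero, sub_zero, smul_eq_mul]
  field_simp

theorem angle_le_nat_mul_two_mul_arcsin {g : ℝ → V} {K a b : ℝ} (hab : a ≤ b)
    (hg : ∀ t ∈ Icc a b, ‖g t‖ = 1)
    (hlip : ∀ u ∈ Icc a b, ∀ v ∈ Icc a b, u ≤ v → ‖g v - g u‖ ≤ K * (v - u))
    {n : ℕ} (hn : 0 < n) (h2 : K * (b - a) / n ≤ 2) :
    angle (g a) (g b) ≤ n * (2 * arcsin (K * (b - a) / n / 2)) := by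
  set h := (b - a) / n
  have hh : 0 ≤ h := div_nonneg (sub_nonneg.2 hab) n.cast_nonneg
  have hnh : a + n * h = b := by simp only [h]; field_simp; ring
  have hmem : ∀ i ≤ n, a + i * h ∈ Icc a b := fun i hi =>
    ⟨by nlinarith, by rw [← hnh]; gcongr⟩
  have hKh : K * h = K * (b - a) / n := by simp only [h]; ring
  suffices ∀ i ≤ n, angle (g a) (g (a + i * h)) ≤ i * (2 * arcsin (K * (b - a) / n / 2)) by
    simpa [hnh] using this n le_rfl
  intro i hi
  induction i with
  | zero =>
    simp [angle_self (norm_ne_zero_iff.1 ((hg a (left_mem_Icc.2 hab)).symm ▸ one_ne_zero))]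
  | succ i ih =>
    have hi' := hmem i (by omega)
    have hi1 := hmem (i + 1) hi
    have hstep : angle (g (a + i * h)) (g (a + (i + 1 : ℕ) * h))
        ≤ 2 * arcsin (K * (b - a) / n / 2) := by
      refine angle_le_two_mul_arcsin (hg _ hi') (hg _ hi1) ?_ h2
      rw [norm_sub_rev, ← hKh]
      convert hlip _ hi' _ hi1 (by push_cast; nlinarith) using 2
      push_cast; ring
    calc angle (g a) (g (a + (i + 1 : ℕ) * h))
        ≤ angle (g a) (g (a + i * h)) + angle (g (a + i * h)) (g (a + (i + 1 : ℕ) * h)) :=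
          angle_le_angle_add_angle _ _ _
      _ ≤ i * (2 * arcsin (K * (b - a) / n / 2)) + 2 * arcsin (K * (b - a) / n / 2) :=
          add_le_add (ih (by omega)) hstep
      _ = (i + 1 : ℕ) * (2 * arcsin (K * (b - a) / n / 2)) := by push_cast; ring

theorem angle_le_mul_of_norm_sub_le {g : ℝ → V} {K a b : ℝ} (hab : a ≤ b)
    (hg : ∀ t ∈ Icc a b, ‖g t‖ = 1)
    (hlip : ∀ u ∈ Icc a b, ∀ v ∈ Icc a b, u ≤ v → ‖g v - g u‖ ≤ K * (v - u)) :
    angle (g a) (g b) ≤ K * (b - a) := by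
  have hsmall : ∀ᶠ n : ℕ in atTop, K * (b - a) / n ≤ 2 :=
    (tendsto_const_div_atTop_nhds_zero_nat _).eventually (eventually_le_nhds two_pos)
  refine ge_of_tendsto (tendsto_nat_mul_two_mul_arcsin _) ?_
  filter_upwards [hsmall, eventually_gt_atTop 0] with n h2 hn
  exact angle_le_nat_mul_two_mul_arcsin hab hg hlip hn h2

theorem dist_midpoint_lt_of_mem_closedBall_inter {P : Type*} [MetricSpace P]
    [NormedAddTorsor V P] {c₁ c₂ p : P} {r : ℝ}
    (hc : c₁ ≠ c₂) (hp : p ∈ closedBall c₁ r ∩ closedBall c₂ r) :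
    dist p (midpoint ℝ c₁ c₂) < r := by
  have h₁ : dist p c₁ ≤ r := hp.1
  have h₂ : dist p c₂ ≤ r := hp.2
  have hc₁₂ : 0 < dist c₁ c₂ := dist_pos.2 hc
  have :=
    EuclideanGeometry.dist_sq_add_dist_sq_eq_two_mul_dist_midpoint_sq_add_half_dist_sq p c₁ c₂
  nlinarith [dist_nonneg (x := p) (y := c₁), dist_nonneg (x := p) (y := c₂),
    dist_nonneg (x := p) (y := midpoint ℝ c₁ c₂)]

theorem dist_lt_two_mul_of_mem_closedBall_inter {P : Type*} [MetricSpace P]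
    [NormedAddTorsor V P] {c₁ c₂ p q : P} {r : ℝ}
    (hc : c₁ ≠ c₂) (hp : p ∈ closedBall c₁ r ∩ closedBall c₂ r)
    (hq : q ∈ closedBall c₁ r ∩ closedBall c₂ r) : dist p q < 2 * r := by
  calc dist p q ≤ dist p (midpoint ℝ c₁ c₂) + dist q (midpoint ℝ c₁ c₂) :=
        dist_triangle_right _ _ _
    _ < r + r := add_lt_add (dist_midpoint_lt_of_mem_closedBall_inter hc hp)
        (dist_midpoint_lt_of_mem_closedBall_inter hc hq)
    _ = 2 * r := by ring

end

namespace IsKConstrained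

variable {κ r s : ℝ} {σ σ' σ'' : ℝ → Plane}

theorem norm_deriv_sub_le (h : IsKConstrained κ s σ σ' σ'') {u v : ℝ} (hu : u ∈ Icc 0 s)
    (hv : v ∈ Icc 0 s) (huv : u ≤ v) : ‖σ' v - σ' u‖ ≤ κ * (v - u) := by
  obtain ⟨-, -, hcont, -, F, hF⟩ := h
  exact norm_sub_le_of_hasDerivAt_off_finset F huv (hcont.mono (Icc_subset_Icc hu.1 hv.2))
    fun t ht => hF t ⟨hu.1.trans ht.1.le, ht.2.le.trans hv.2⟩

theorem angle_deriv_le (h : IsKConstrained κ s σ σ' σ'') {u v : ℝ} (hu : u ∈ Icc 0 s)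
    (hv : v ∈ Icc 0 s) (huv : u ≤ v) : angle (σ' u) (σ' v) ≤ κ * (v - u) :=
  have hsub : Icc u v ⊆ Icc 0 s := Icc_subset_Icc hu.1 hv.2
  angle_le_mul_of_norm_sub_le huv (fun t ht => h.2.2.2.1 t (hsub ht))
    fun _ hp _ hq hpq => h.norm_deriv_sub_le (hsub hp) (hsub hq) hpq

theorem two_mul_sin_le_dist (hr : 0 < r) (h : IsKConstrained (1 / r) s σ σ' σ'') {a b : ℝ}
    (ha : 0 ≤ a) (hab : a ≤ b) (hb : b ≤ s) (hl : b - a ≤ π * r) :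
    2 * r * sin ((b - a) / (2 * r)) ≤ dist (σ a) (σ b) := by
  have ⟨_, hderiv, hcont, hnorm, _⟩ := h
  have hsub : Icc a b ⊆ Icc 0 s := Icc_subset_Icc ha hb
  set m := (a + b) / 2 with hm_def
  have hm : m ∈ Icc 0 s := hsub ⟨by linarith, by linarith⟩
  have hcos : ∀ t ∈ Icc a b, cos ((t - m) / r) ≤ ⟪σ' t, σ' m⟫ := by
    intro t ht
    have hangle : angle (σ' t) (σ' m) ≤ |t - m| / r := by
      rcases le_total t m with htm | hmt
      · simpa [abs_of_nonpos (sub_nonpos.2 htm), div_eq_inv_mul] using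
          h.angle_deriv_le (hsub ht) hm htm
      · rw [angle_comm]
        simpa [abs_of_nonneg (sub_nonneg.2 hmt), div_eq_inv_mul] using
          h.angle_deriv_le hm (hsub ht) hmt
    have hπ : |t - m| / r ≤ π := by
      rw [div_le_iff₀ hr, abs_le]; constructor <;> linarith [ht.1, ht.2]
    rw [← cos_abs, abs_div, abs_of_pos hr]
    exact cos_le_inner_of_angle_le (hnorm t (hsub ht)) (hnorm m hm) hangle hπ
  have hinner_cont : ContinuousOn (fun t => ⟪σ' t, σ' m⟫) (uIcc a b) := by
    rw [uIcc_of_le hab]; exact (hcont.mono hsub).inner continuousOn_const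
  have hftc : ∫ t in a..b, ⟪σ' t, σ' m⟫ = ⟪σ b - σ a, σ' m⟫ := by
    rw [inner_sub_left]
    refine intervalIntegral.integral_eq_sub_of_hasDerivAt (f := fun t => ⟪σ t, σ' m⟫)
      (fun t ht => ?_) hinner_cont.intervalIntegrable
    rw [uIcc_of_le hab] at ht
    simpa using (hderiv t (hsub ht)).inner ℝ (hasDerivAt_const t (σ' m))
  calc 2 * r * sin ((b - a) / (2 * r)) = ∫ t in a..b, cos ((t - m) / r) :=
        (integral_cos_sub_midpoint_div hr.ne' a b).symm
    _ ≤ ∫ t in a..b, ⟪σ' t, σ' m⟫ :=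
        intervalIntegral.integral_mono_on hab
          ((by fun_prop : Continuous _).intervalIntegrable a b) hinner_cont.intervalIntegrable hcos
    _ = ⟪σ b - σ a, σ' m⟫ := hftc
    _ ≤ ‖σ b - σ a‖ := by
        simpa [hnorm m hm] using real_inner_le_norm (σ b - σ a) (σ' m)
    _ = dist (σ a) (σ b) := by rw [dist_comm, dist_eq_norm]

theorem le_pi_mul_of_dist_lt (hr : 0 < r) (h : IsKConstrained (1 / r) s σ σ' σ'')
    (hdist : ∀ t ∈ Icc 0 s, ∀ u ∈ Icc 0 s, dist (σ t) (σ u) < 2 * r) : s ≤ π * r := by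
  by_contra! hs
  have hπr : π * r ∈ Icc 0 s := ⟨by positivity, hs.le⟩
  have hchord := h.two_mul_sin_le_dist hr le_rfl hπr.1 hπr.2 (by simp)
  rw [sub_zero, show π * r / (2 * r) = π / 2 by field_simp, sin_pi_div_two, mul_one] at hchord
  exact (hdist 0 (left_mem_Icc.2 (hπr.1.trans hs.le)) _ hπr).not_ge hchord

theorem injOn_of_le_pi_mul (hr : 0 < r) (h : IsKConstrained (1 / r) s σ σ' σ'')
    (hs : s ≤ π * r) : InjOn σ (Icc 0 s) := by
  intro a ha b hb heq
  by_contra hne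
  wlog hab : a < b generalizing a b
  · exact this hb ha heq.symm (Ne.symm hne) ((not_lt.1 hab).lt_of_ne (Ne.symm hne))
  have hl : b - a ≤ π * r := by linarith [ha.1, hb.2]
  have hsin : 0 < sin ((b - a) / (2 * r)) := by
    refine sin_pos_of_pos_of_lt_pi (by apply div_pos <;> linarith) ?_
    rw [div_lt_iff₀ (by positivity)]
    nlinarith [pi_pos]
  have hchord := h.two_mul_sin_le_dist hr ha.1 hab.le hb.2 hl
  rw [heq, dist_self] at hchord
  nlinarith

end IsKConstrained

theorem curve_in_lens_embedded_general (r s : ℝ) (hr : 0 < r)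
    (c₁ c₂ : Plane)
    (hcc : c₁ ≠ c₂)
    (σ σ' σ'' : ℝ → Plane)
    (hσ : IsKConstrained (1 / r) s σ σ' σ'')
    (hlens : ∀ t ∈ Icc (0:ℝ) s,
        σ t ∈ closure (interior (closedBall c₁ r ∩ closedBall c₂ r))) :
    InjOn σ (Ioo 0 s) := by
  have hlens' : ∀ t ∈ Icc (0:ℝ) s, σ t ∈ closedBall c₁ r ∩ closedBall c₂ r := fun t ht =>
    closure_minimal interior_subset (isClosed_closedBall.inter isClosed_closedBall) (hlens t ht)
  have hs : s ≤ π * r := hσ.le_pi_mul_of_dist_lt hr fun t ht u hu =>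
    dist_lt_two_mul_of_mem_closedBall_inter hcc (hlens' t ht) (hlens' u hu)
  exact (hσ.injOn_of_le_pi_mul hr hs).mono Ioo_subset_Icc_self

/-- For 0 < dist(x,y) < 2r, any (1/r)-constrained curve from x to y whose image
lies in the closed lens cl(I) is embedded (injective on the open parameter interval). -/
theorem curve_in_lens_embedded (r s : ℝ) (hr : 0 < r)
    (x y c₁ c₂ : Plane)
    (hd : 0 < dist x y) (hd2 : dist x y < 2 * r)
    (hc₁x : dist c₁ x = r) (hc₁y : dist c₁ y = r)
    (hc₂x : dist c₂ x = r) (hc₂y : dist c₂ y = r)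
    (hcc : c₁ ≠ c₂)
    (σ σ' σ'' : ℝ → Plane)
    (hσ : IsKConstrained (1 / r) s σ σ' σ'')
    (hx : σ 0 = x) (hy : σ s = y)
    (hlens : ∀ t ∈ Icc (0:ℝ) s,
        σ t ∈ closure (interior (closedBall c₁ r ∩ closedBall c₂ r))) :
    InjOn σ (Ioo 0 s) :=
  curve_in_lens_embedded_general r s hr c₁ c₂ hcc σ σ' σ'' hσ hlens
end
end

section
/- Let σ : [0,s] → ℝ² be an arc-length parametrized C¹, piecewise C² curve with ‖σ''(t)‖ ≤ 1/r wherever defined, and suppose s < r. Then σ cannot return to σ(0): σ(t) ≠ σ(0) for all t ∈ (0,s]. -/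
open Set
open scoped RealInnerProductSpace

noncomputable section

/-- MVT inequality with differentiability only on the open interval. -/
lemma mvt_open {E : Type*} [NormedAddCommGroup E] [NormedSpace ℝ E]
    (g g' : ℝ → E) (C a b : ℝ) (hab : a ≤ b)
    (hc : ContinuousOn g (Icc a b))
    (hd : ∀ x ∈ Ioo a b, HasDerivAt g (g' x) x ∧ ‖g' x‖ ≤ C) :
    ‖g b - g a‖ ≤ C * (b - a) := by
  rcases eq_or_lt_of_le hab with rfl | hlt
  · simp
  -- key estimate inside the open interval
  have key : ∀ x ∈ Ioo a b, ∀ y ∈ Ioo a b, ‖g y - g x‖ ≤ C * ‖y - x‖ := by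
    intro x hx y hy
    exact Convex.norm_image_sub_le_of_norm_hasDerivWithin_le
      (fun z hz => (hd z hz).1.hasDerivWithinAt)
      (fun z hz => (hd z hz).2) (convex_Ioo a b) hx hy
  have hga : Filter.Tendsto g (nhdsWithin a (Ioo a b)) (nhds (g a)) :=
    (hc a ⟨le_refl a, hab⟩).mono_left (nhdsWithin_mono a Ioo_subset_Icc_self)
  have hgb : Filter.Tendsto g (nhdsWithin b (Ioo a b)) (nhds (g b)) :=
    (hc b ⟨hab, le_refl b⟩).mono_left (nhdsWithin_mono b Ioo_subset_Icc_self)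
  set m := (a + b) / 2 with hm
  have ham : a < m := by simp [hm]; linarith
  have hmb : m < b := by simp [hm]; linarith
  have hne1 : (nhdsWithin a (Ioo a b)).NeBot := by
    exact left_nhdsWithin_Ioo_neBot hlt
  have hne2 : (nhdsWithin b (Ioo a b)).NeBot := by
    exact right_nhdsWithin_Ioo_neBot hlt
  set L := (nhdsWithin a (Ioo a b)) ×ˢ (nhdsWithin b (Ioo a b)) with hL
  have hLne : L.NeBot := Filter.prod_neBot.mpr ⟨hne1, hne2⟩
  have hx : Filter.Tendsto (fun p : ℝ × ℝ => p.1) L (nhds a) :=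
    Filter.tendsto_fst.mono_right nhdsWithin_le_nhds
  have hy : Filter.Tendsto (fun p : ℝ × ℝ => p.2) L (nhds b) :=
    Filter.tendsto_snd.mono_right nhdsWithin_le_nhds
  have htend : Filter.Tendsto (fun p : ℝ × ℝ => ‖g p.2 - g p.1‖ - C * (p.2 - p.1)) L
      (nhds (‖g b - g a‖ - C * (b - a))) :=
    (((hgb.comp Filter.tendsto_snd).sub (hga.comp Filter.tendsto_fst)).norm).sub
      ((hy.sub hx).const_mul C)
  have hev : ∀ᶠ p : ℝ × ℝ in L, ‖g p.2 - g p.1‖ - C * (p.2 - p.1) ≤ 0 := by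
    have h1 : ∀ᶠ x in nhdsWithin a (Ioo a b), x ∈ Ioo a b ∧ x < m := by
      filter_upwards [self_mem_nhdsWithin,
        (eventually_lt_nhds ham).filter_mono nhdsWithin_le_nhds] with x h1 h2
      exact ⟨h1, h2⟩
    have h2 : ∀ᶠ y in nhdsWithin b (Ioo a b), y ∈ Ioo a b ∧ m < y := by
      filter_upwards [self_mem_nhdsWithin,
        (eventually_gt_nhds hmb).filter_mono nhdsWithin_le_nhds] with y h1 h2
      exact ⟨h1, h2⟩
    filter_upwards [Filter.prod_mem_prod h1 h2]
    rintro ⟨x, y⟩ ⟨⟨hx, hxm⟩, ⟨hy, hmy⟩⟩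
    have hxy : x ≤ y := le_of_lt (lt_trans hxm hmy)
    have := key x hx y hy
    rw [Real.norm_eq_abs, abs_of_nonneg (by linarith)] at this
    linarith
  have := le_of_tendsto htend hev
  linarith

/-- MVT inequality allowing a finite exceptional set. -/
lemma mvt_finset {E : Type*} [NormedAddCommGroup E] [NormedSpace ℝ E]
    (g g' : ℝ → E) (C : ℝ) (F : Finset ℝ) :
    ∀ a b : ℝ, a ≤ b → ContinuousOn g (Icc a b) →
      (∀ x ∈ Ioo a b, x ∉ F → HasDerivAt g (g' x) x ∧ ‖g' x‖ ≤ C) →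
      ‖g b - g a‖ ≤ C * (b - a) := by
  induction F using Finset.induction_on with
  | empty =>
    intro a b hab hc hd
    exact mvt_open g g' C a b hab hc fun x hx => hd x hx (by simp)
  | @insert c F hcF ih =>
    intro a b hab hc hd
    by_cases hcab : c ∈ Ioo a b
    · have h1 : ‖g c - g a‖ ≤ C * (c - a) := by
        refine ih a c (le_of_lt hcab.1) (hc.mono (Icc_subset_Icc le_rfl (le_of_lt hcab.2)))
          fun x hx hxF => hd x ⟨hx.1, lt_trans hx.2 hcab.2⟩ ?_
        simp only [Finset.mem_insert, not_or]
        exact ⟨ne_of_lt hx.2, hxF⟩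
      have h2 : ‖g b - g c‖ ≤ C * (b - c) := by
        refine ih c b (le_of_lt hcab.2) (hc.mono (Icc_subset_Icc (le_of_lt hcab.1) le_rfl))
          fun x hx hxF => hd x ⟨lt_trans hcab.1 hx.1, hx.2⟩ ?_
        simp only [Finset.mem_insert, not_or]
        exact ⟨(ne_of_lt hx.1).symm, hxF⟩
      calc ‖g b - g a‖ ≤ ‖g b - g c‖ + ‖g c - g a‖ := norm_sub_le_norm_sub_add_norm_sub _ _ _
        _ ≤ C * (b - c) + C * (c - a) := add_le_add h2 h1
        _ = C * (b - a) := by ring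
    · refine ih a b hab hc fun x hx hxF => hd x hx ?_
      simp only [Finset.mem_insert, not_or]
      exact ⟨fun h => hcab (h ▸ hx), hxF⟩

/-- A fragment cannot close up: a (1/r)-constrained curve of length s < r never
returns to its starting point. -/
theorem fragment_does_not_return (r s : ℝ) (hr : 0 < r) (hs : s < r)
    (σ σ' σ'' : ℝ → Plane)
    (hσ : IsKConstrained (1 / r) s σ σ' σ'') :
    ∀ t ∈ Ioc (0:ℝ) s, σ t ≠ σ 0 := by
  obtain ⟨hs0, hderiv, hcont, hunit, F, hF⟩ := hσ
  -- Step A: ‖σ' t - σ' 0‖ ≤ t / r for t ∈ Icc 0 s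
  have stepA : ∀ t ∈ Icc (0:ℝ) s, ‖σ' t - σ' 0‖ ≤ t / r := by
    intro t ht
    have := mvt_finset σ' σ'' (1 / r) F 0 t ht.1
      (hcont.mono (Icc_subset_Icc le_rfl ht.2))
      (fun x hx hxF => hF x ⟨le_of_lt hx.1, le_trans (le_of_lt hx.2) ht.2⟩ hxF)
    calc ‖σ' t - σ' 0‖ ≤ 1 / r * (t - 0) := this
      _ = t / r := by ring
  -- Step B: the inner product ⟪σ' 0, σ' t⟫ is positive on Icc 0 s
  have stepB : ∀ t ∈ Icc (0:ℝ) s, 0 < ⟪σ' 0, σ' t⟫ := by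
    intro t ht
    have h1 : ‖σ' 0‖ = 1 := hunit 0 ⟨le_rfl, hs0⟩
    have h2 : ‖σ' t‖ = 1 := hunit t ht
    have h3 : ‖σ' t - σ' 0‖ < 1 := by
      have := stepA t ht
      have htr : t / r < 1 := (div_lt_one hr).mpr (lt_of_le_of_lt ht.2 hs)
      linarith
    have key := norm_sub_sq_real (σ' t) (σ' 0)
    have hcomm : ⟪σ' t, σ' 0⟫ = ⟪σ' 0, σ' t⟫ := real_inner_comm _ _
    have hsq : ‖σ' t - σ' 0‖ ^ 2 < 1 := by
      have h0 : (0:ℝ) ≤ ‖σ' t - σ' 0‖ := norm_nonneg _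
      nlinarith
    rw [h1, h2, hcomm] at key
    nlinarith
  -- Step C: t ↦ ⟪σ' 0, σ t⟫ is strictly increasing on Icc 0 s
  have hcσ : ContinuousOn σ (Icc 0 s) := fun t ht => (hderiv t ht).continuousAt.continuousWithinAt
  set g : ℝ → ℝ := fun t => ⟪σ' 0, σ t⟫ with hg
  have hgd : ∀ t ∈ Icc (0:ℝ) s, HasDerivAt g ⟪σ' 0, σ' t⟫ t := by
    intro t ht
    have h := (hasDerivAt_const t (σ' 0)).inner ℝ (hderiv t ht)
    rw [inner_zero_left, add_zero] at h
    exact h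
  have hmono : StrictMonoOn g (Icc 0 s) := by
    apply strictMonoOn_of_deriv_pos (convex_Icc 0 s)
    · exact fun t ht => ((hgd t ht).continuousAt).continuousWithinAt
    · intro t ht
      rw [interior_Icc] at ht
      have htIcc : t ∈ Icc (0:ℝ) s := ⟨le_of_lt ht.1, le_of_lt ht.2⟩
      rw [(hgd t htIcc).deriv]
      exact stepB t htIcc
  intro t ht hcontra
  have h0 : (0:ℝ) ∈ Icc (0:ℝ) s := ⟨le_rfl, hs0⟩
  have htI : t ∈ Icc (0:ℝ) s := ⟨le_of_lt ht.1, ht.2⟩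
  have := hmono h0 htI ht.1
  rw [hg] at this
  simp only [hcontra] at this
  exact lt_irrefl _ this
end
end
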